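/- arXiv:2510.03268 — 4 statements merged into one kernel-verified Lean document; each statement's English description precedes it below -/
import Mathlib

section
/- For every ν > 0 and every m > 0, the derivative of the function G(m) = log(I_ν(m)) − ν·log(m) equals I_{ν+1}(m)/I_ν(m), and this value lies strictly between 0 and 1. In particular, G is strictly increasing with derivative bounded by 1. -/
open Real

/-- The modified Bessel function of the first kind of order `ν`. -/
noncomputable def besselI (ν m : ℝ) : ℝ :=
  ∑' k : ℕ, (1 / ((Nat.factorial k : ℝ) * Real.Gamma (ν + k + 1))) *
    (m / 2) ^ (2 * (k : ℝ) + ν)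

/-!
Differentiating the series termwise, `I_ν' = I_{ν+1} + (ν/x) I_ν`, which gives
`G' = I_{ν+1}/I_ν > 0`. For `I_{ν+1} < I_ν`: the `k`-th term of `I_{ν+1}(x)` is `x / (2(ν+k+1))`
times that of `I_ν(x)`, so the inequality holds termwise for `x < 2(ν+1)`. For larger `x`, the
companion recurrence `I_{ν+1}' = I_ν - ((ν+1)/x) I_{ν+1}` shows that `D = I_ν - I_{ν+1}` satisfies
`D' + D = (ν/x) I_ν + ((ν+1)/x) I_{ν+1} > 0`, so `eˣ D` is increasing and stays positive.
-/

open Set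
open scoped Nat

noncomputable def besselTerm (ν : ℝ) (k : ℕ) (x : ℝ) : ℝ :=
  1 / ((k ! : ℝ) * Gamma (ν + k + 1)) * (x / 2) ^ (2 * (k : ℝ) + ν)

theorem Real.Gamma_le_Gamma_add_nat {ν : ℝ} (hν : 0 ≤ ν) (k : ℕ) :
    Gamma (ν + 1) ≤ Gamma (ν + k + 1) := by
  induction k with
  | zero => simp
  | succ k ih =>
    have hk : (0 : ℝ) ≤ k := k.cast_nonneg
    have hΓ : 0 < Gamma (ν + k + 1) := Gamma_pos_of_pos (by linarith)
    rw [Nat.cast_succ, ← add_assoc, Gamma_add_one (s := ν + k + 1) (by linarith)]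
    nlinarith

theorem Real.Gamma_add_nat_add_one_pos {ν : ℝ} (hν : -1 < ν) (k : ℕ) :
    0 < Gamma (ν + k + 1) :=
  Gamma_pos_of_pos (by linarith [(k.cast_nonneg : (0 : ℝ) ≤ k)])

theorem strictMonoOn_Ioi_of_hasDerivAt_pos {f f' : ℝ → ℝ} {a : ℝ}
    (hf : ∀ x ∈ Ioi a, HasDerivAt f (f' x) x) (hf' : ∀ x ∈ Ioi a, 0 < f' x) :
    StrictMonoOn f (Ioi a) :=
  strictMonoOn_of_hasDerivWithinAt_pos (convex_Ioi a)
    (fun x hx => (hf x hx).continuousAt.continuousWithinAt)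
    (fun x hx => (hf x (interior_subset hx)).hasDerivWithinAt)
    (fun x hx => hf' x (interior_subset hx))

section

variable {ν x : ℝ}

theorem besselTerm_pos (hν : -1 < ν) (hx : 0 < x) (k : ℕ) : 0 < besselTerm ν k x := by
  have := Gamma_add_nat_add_one_pos hν k
  unfold besselTerm
  positivity

theorem besselTerm_le (hν : 0 ≤ ν) (hx : 0 < x) (k : ℕ) :
    besselTerm ν k x ≤ (x / 2) ^ ν / Gamma (ν + 1) * (((x / 2) ^ 2) ^ k / k !) := by
  have hΓ : 0 < Gamma (ν + 1) := Gamma_pos_of_pos (by linarith)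
  have hpow : (x / 2) ^ (2 * (k : ℝ) + ν) = ((x / 2) ^ 2) ^ k * (x / 2) ^ ν := by
    rw [rpow_add (by positivity), ← pow_mul, ← rpow_natCast]
    push_cast
    ring_nf
  calc besselTerm ν k x = ((x / 2) ^ 2) ^ k * (x / 2) ^ ν / (k ! * Gamma (ν + k + 1)) := by
        rw [besselTerm, hpow]; ring
    _ ≤ ((x / 2) ^ 2) ^ k * (x / 2) ^ ν / (k ! * Gamma (ν + 1)) := by
        gcongr; exact Gamma_le_Gamma_add_nat hν k
    _ = _ := by ring

theorem summable_besselTerm (hν : 0 ≤ ν) (hx : 0 < x) : Summable (besselTerm ν · x) :=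
  .of_nonneg_of_le (fun k => (besselTerm_pos (by linarith) hx k).le) (besselTerm_le hν hx)
    ((Real.summable_pow_div_factorial _).mul_left _)

theorem besselTerm_add_one (hx : 0 < x) (k : ℕ) (hνk : ν + k + 1 ≠ 0) :
    besselTerm (ν + 1) k x = x / (2 * (ν + k + 1)) * besselTerm ν k x := by
  rw [besselTerm, besselTerm, show ν + 1 + k + 1 = ν + k + 1 + 1 by ring, Gamma_add_one hνk,
    show 2 * (k : ℝ) + (ν + 1) = 2 * k + ν + 1 by ring, rpow_add_one (by positivity)]
  field_simp

theorem besselTerm_succ (hx : 0 < x) (k : ℕ) :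
    2 * (k + 1) / x * besselTerm ν (k + 1) x = besselTerm (ν + 1) k x := by
  rw [besselTerm, besselTerm, Nat.factorial_succ,
    show ν + (k + 1 : ℕ) + 1 = ν + 1 + k + 1 by push_cast; ring,
    show 2 * ((k + 1 : ℕ) : ℝ) + ν = 2 * k + (ν + 1) + 1 by push_cast; ring,
    rpow_add_one (by positivity)]
  push_cast
  field_simp

theorem hasDerivAt_besselTerm (hx : 0 < x) (k : ℕ) :
    HasDerivAt (besselTerm ν k) ((2 * k + ν) / x * besselTerm ν k x) x := by
  have h := (((hasDerivAt_id x).div_const 2).rpow_const (p := 2 * (k : ℝ) + ν)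
    (Or.inl (by simp [hx.ne']))).const_mul (1 / ((k ! : ℝ) * Gamma (ν + k + 1)))
  refine h.congr_deriv ?_
  rw [besselTerm, id, rpow_sub_one (by positivity)]
  field_simp

theorem besselTerm_le_of_le (hν : 0 ≤ ν) (hx : 0 < x) {y : ℝ} (hxy : x ≤ y) (k : ℕ) :
    besselTerm ν k x ≤ besselTerm ν k y := by
  have := Gamma_add_nat_add_one_pos (by linarith) k
  unfold besselTerm
  gcongr

theorem hasSum_besselTerm (hν : 0 ≤ ν) (hx : 0 < x) :
    HasSum (besselTerm ν · x) (besselI ν x) :=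
  (summable_besselTerm hν hx).hasSum

theorem hasSum_besselTerm_deriv (hν : 0 ≤ ν) (hx : 0 < x) :
    HasSum (fun k : ℕ => (2 * k + ν) / x * besselTerm ν k x)
      (besselI (ν + 1) x + ν / x * besselI ν x) := by
  have hshift : HasSum (fun k : ℕ => 2 * k / x * besselTerm ν k x) (besselI (ν + 1) x) := by
    refine (hasSum_nat_add_iff' 1).mp ?_
    simpa only [Nat.cast_add, Nat.cast_one, besselTerm_succ hx, Finset.range_one,
      Finset.sum_singleton, Nat.cast_zero, mul_zero, zero_div, zero_mul, sub_zero]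
      using hasSum_besselTerm (by linarith : 0 ≤ ν + 1) hx
  simpa only [add_div, add_mul] using hshift.add ((hasSum_besselTerm hν hx).mul_left (ν / x))

theorem hasDerivAt_besselI_tsum (hν : 0 ≤ ν) (hx : 0 < x) :
    HasDerivAt (besselI ν) (∑' k : ℕ, (2 * k + ν) / x * besselTerm ν k x) x := by
  have hx_mem : x ∈ Ioo (x / 2) (2 * x) := ⟨by linarith, by linarith⟩
  have hbound (k : ℕ) (y : ℝ) (hy : y ∈ Ioo (x / 2) (2 * x)) :
      ‖(2 * k + ν) / y * besselTerm ν k y‖ ≤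
        4 * ((2 * k + ν) / (2 * x) * besselTerm ν k (2 * x)) := by
    obtain ⟨hxy, hyx⟩ := hy
    have hy : 0 < y := by linarith
    have hk : 0 ≤ 2 * (k : ℝ) + ν := by positivity
    have hT := (besselTerm_pos (ν := ν) (by linarith) hy k).le
    calc ‖(2 * k + ν) / y * besselTerm ν k y‖ = (2 * k + ν) / y * besselTerm ν k y :=
          Real.norm_of_nonneg (mul_nonneg (div_nonneg hk hy.le) hT)
      _ ≤ (2 * k + ν) / (x / 2) * besselTerm ν k (2 * x) :=
          mul_le_mul (div_le_div_of_nonneg_left hk (by positivity) hxy.le)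
            (besselTerm_le_of_le hν hy hyx.le k) hT (by positivity)
      _ = 4 * ((2 * k + ν) / (2 * x) * besselTerm ν k (2 * x)) := by
          field_simp; ring
  exact hasDerivAt_tsum_of_isPreconnected
    ((hasSum_besselTerm_deriv hν (by linarith)).summable.mul_left 4) isOpen_Ioo
    isPreconnected_Ioo (fun k y hy => hasDerivAt_besselTerm (by linarith [hy.1]) k) hbound
    hx_mem (summable_besselTerm hν hx) hx_mem

theorem hasDerivAt_besselI (hν : 0 ≤ ν) (hx : 0 < x) :
    HasDerivAt (besselI ν) (besselI (ν + 1) x + ν / x * besselI ν x) x :=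
  (hasSum_besselTerm_deriv hν hx).tsum_eq ▸ hasDerivAt_besselI_tsum hν hx

theorem hasDerivAt_besselI_add_one (hν : 0 ≤ ν) (hx : 0 < x) :
    HasDerivAt (besselI (ν + 1)) (besselI ν x - (ν + 1) / x * besselI (ν + 1) x) x := by
  convert hasDerivAt_besselI_tsum (by linarith : 0 ≤ ν + 1) hx using 1
  refine (HasSum.tsum_eq ?_).symm
  have hterm (k : ℕ) : (2 * k + (ν + 1)) / x * besselTerm (ν + 1) k x
      = besselTerm ν k x - (ν + 1) / x * besselTerm (ν + 1) k x := by
    rw [besselTerm_add_one hx k (by positivity)]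
    field_simp
    ring
  simpa only [hterm] using
    (hasSum_besselTerm hν hx).sub ((hasSum_besselTerm (by linarith) hx).mul_left ((ν + 1) / x))

theorem besselI_pos (hν : 0 ≤ ν) (hx : 0 < x) : 0 < besselI ν x :=
  (summable_besselTerm hν hx).tsum_pos (fun k => (besselTerm_pos (by linarith) hx k).le) 0
    (besselTerm_pos (by linarith) hx 0)

theorem besselI_add_one_lt_of_lt (hν : 0 ≤ ν) (hx : 0 < x) (hxν : x < 2 * (ν + 1)) :
    besselI (ν + 1) x < besselI ν x := by
  have hterm (k : ℕ) : besselTerm (ν + 1) k x < besselTerm ν k x := by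
    have hk : 0 < ν + k + 1 := by positivity
    rw [besselTerm_add_one hx k hk.ne']
    refine mul_lt_of_lt_one_left (besselTerm_pos (by linarith) hx k) ?_
    rw [div_lt_one (by positivity)]
    linarith [(k.cast_nonneg : (0 : ℝ) ≤ k)]
  exact (summable_besselTerm (by linarith) hx).tsum_lt_tsum (fun k => (hterm k).le) (hterm 0)
    (summable_besselTerm hν hx)

theorem strictMonoOn_exp_mul_besselI_sub (hν : 0 ≤ ν) :
    StrictMonoOn (fun x => exp x * (besselI ν x - besselI (ν + 1) x)) (Ioi 0) := by
  refine strictMonoOn_Ioi_of_hasDerivAt_pos (fun x hx => ((hasDerivAt_exp x).mul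
    ((hasDerivAt_besselI hν hx).sub (hasDerivAt_besselI_add_one hν hx))))
    fun x (hx : 0 < x) => ?_
  have h₀ := besselI_pos hν hx
  have h₁ := besselI_pos (by linarith : 0 ≤ ν + 1) hx
  have : 0 < ν / x * besselI ν x + (ν + 1) / x * besselI (ν + 1) x := by positivity
  exact (mul_pos (exp_pos x) this).trans_eq (by ring)

theorem besselI_add_one_lt (hν : 0 ≤ ν) (hx : 0 < x) :
    besselI (ν + 1) x < besselI ν x := by
  obtain ⟨x₀, hx₀, hx₀x, hx₀ν⟩ : ∃ x₀, 0 < x₀ ∧ x₀ < x ∧ x₀ < 2 * (ν + 1) :=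
    ⟨min x (ν + 1) / 2, by positivity, by linarith [min_le_left x (ν + 1)],
      by linarith [min_le_right x (ν + 1)]⟩
  have h₀ : 0 < exp x₀ * (besselI ν x₀ - besselI (ν + 1) x₀) :=
    mul_pos (exp_pos x₀) (sub_pos.mpr (besselI_add_one_lt_of_lt hν hx₀ hx₀ν))
  have h := h₀.trans (strictMonoOn_exp_mul_besselI_sub hν hx₀ hx hx₀x)
  exact sub_pos.mp (pos_of_mul_pos_right h (exp_pos x).le)

theorem hasDerivAt_log_besselI_sub_mul_log (hν : 0 ≤ ν) (hx : 0 < x) :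
    HasDerivAt (fun x => log (besselI ν x) - ν * log x)
      (besselI (ν + 1) x / besselI ν x) x := by
  refine (((hasDerivAt_besselI hν hx).log (besselI_pos hν hx).ne').sub
    ((hasDerivAt_log hx.ne').const_mul ν)).congr_deriv ?_
  have := (besselI_pos hν hx).ne'
  field_simp
  ring

end

theorem bessel_log_deriv (ν : ℝ) (hν : 0 < ν) (m : ℝ) (hm : 0 < m) :
    HasDerivAt (fun x : ℝ => Real.log (besselI ν x) - ν * Real.log x)
      (besselI (ν + 1) m / besselI ν m) m ∧
    0 < besselI (ν + 1) m / besselI ν m ∧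
    besselI (ν + 1) m / besselI ν m < 1 ∧
    StrictMonoOn (fun x : ℝ => Real.log (besselI ν x) - ν * Real.log x) (Set.Ioi 0) := by
  have hpos {x : ℝ} (hx : 0 < x) : 0 < besselI (ν + 1) x / besselI ν x :=
    div_pos (besselI_pos (by linarith) hx) (besselI_pos hν.le hx)
  refine ⟨hasDerivAt_log_besselI_sub_mul_log hν.le hm, hpos hm,
    (div_lt_one (besselI_pos hν.le hm)).mpr (besselI_add_one_lt hν.le hm),
    strictMonoOn_Ioi_of_hasDerivAt_pos (fun x hx => hasDerivAt_log_besselI_sub_mul_log hν.le hx)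
      fun x hx => hpos hx⟩
end

section
/- For every ν > 0, the function H(m) = I_{ν+1}(m)/(m·I_ν(m)) is strictly decreasing on (0, ∞). -/
open Real Filter Set
open scoped Nat

lemma pow_mul_pow_le_pow_mul_pow {u v : ℝ} (hu : 0 ≤ u) (huv : u ≤ v) {j k : ℕ} (hjk : j ≤ k) :
    v ^ j * u ^ k ≤ u ^ j * v ^ k := by
  obtain ⟨d, rfl⟩ := Nat.exists_eq_add_of_le hjk
  calc v ^ j * u ^ (j + d) = u ^ j * v ^ j * u ^ d := by ring
    _ ≤ u ^ j * v ^ j * v ^ d := by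
      gcongr
      exact mul_nonneg (pow_nonneg hu j) (pow_nonneg (hu.trans huv) j)
    _ = u ^ j * v ^ (j + d) := by ring

section PowerSeriesRatio

variable {a b : ℕ → ℝ}

lemma tsum_mul_pow_mul_tsum_mul_pow_lt (ha : ∀ k, 0 ≤ a k) (hb : ∀ k, 0 ≤ b k)
    (hab : ∀ j k, j ≤ k → a k * b j ≤ a j * b k) (hab₀₁ : a 1 * b 0 < a 0 * b 1)
    {u v : ℝ} (hu : 0 ≤ u) (huv : u < v)
    (hau : Summable fun k => a k * u ^ k) (hav : Summable fun k => a k * v ^ k)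
    (hbu : Summable fun k => b k * u ^ k) (hbv : Summable fun k => b k * v ^ k) :
    (∑' k, a k * v ^ k) * (∑' k, b k * u ^ k) < (∑' k, a k * u ^ k) * (∑' k, b k * v ^ k) := by
  have hv : 0 ≤ v := hu.trans huv.le
  have term_nonneg {c : ℕ → ℝ} (hc : ∀ k, 0 ≤ c k) {x : ℝ} (hx : 0 ≤ x) (k : ℕ) :
      0 ≤ c k * x ^ k := mul_nonneg (hc k) (pow_nonneg hx k)
  set D : ℕ × ℕ → ℝ := fun p =>
    a p.1 * u ^ p.1 * (b p.2 * v ^ p.2) - a p.1 * v ^ p.1 * (b p.2 * u ^ p.2) with hD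
  have hD_symm (j k : ℕ) :
      D (j, k) + D (k, j) = (u ^ j * v ^ k - v ^ j * u ^ k) * (a j * b k - a k * b j) := by
    simp only [hD]; ring
  have hD_symm_nonneg (p : ℕ × ℕ) : 0 ≤ D p + D p.swap := by
    obtain ⟨j, k⟩ := p
    wlog hjk : j ≤ k generalizing j k
    · simpa [add_comm] using this k j (le_of_not_ge hjk)
    rw [Prod.swap_prod_mk, hD_symm]
    exact mul_nonneg (sub_nonneg.2 (pow_mul_pow_le_pow_mul_pow hu huv.le hjk))
      (sub_nonneg.2 (hab j k hjk))
  have hD_symm_pos : 0 < D (0, 1) + D (1, 0) := by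
    rw [hD_symm]
    exact mul_pos (by simpa using huv) (sub_pos.2 hab₀₁)
  have hsum_uv := hau.mul_of_nonneg hbv (term_nonneg ha hu) (term_nonneg hb hv)
  have hsum_vu := hav.mul_of_nonneg hbu (term_nonneg ha hv) (term_nonneg hb hu)
  have hsum_D : Summable D := hsum_uv.sub hsum_vu
  have hsum_D_swap : Summable fun p : ℕ × ℕ => D p.swap :=
    (Equiv.prodComm ℕ ℕ).summable_iff.2 hsum_D
  have htwice : 0 < 2 * ∑' p, D p := by
    have := (hsum_D.add hsum_D_swap).tsum_pos hD_symm_nonneg (0, 1) hD_symm_pos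
    have hswap : ∑' p : ℕ × ℕ, D p.swap = ∑' p, D p := (Equiv.prodComm ℕ ℕ).tsum_eq D
    rwa [hsum_D.tsum_add hsum_D_swap, hswap, ← two_mul] at this
  rw [hau.tsum_mul_tsum hbv hsum_uv, hav.tsum_mul_tsum hbu hsum_vu, ← sub_pos,
    ← hsum_uv.tsum_sub hsum_vu]
  linarith

theorem strictAntiOn_tsum_mul_pow_div_tsum_mul_pow (ha : ∀ k, 0 ≤ a k) (hb : ∀ k, 0 ≤ b k)
    (hb₀ : 0 < b 0) (hab : ∀ j k, j ≤ k → a k * b j ≤ a j * b k)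
    (hab₀₁ : a 1 * b 0 < a 0 * b 1)
    (hsa : ∀ t, 0 < t → Summable fun k => a k * t ^ k)
    (hsb : ∀ t, 0 < t → Summable fun k => b k * t ^ k) :
    StrictAntiOn (fun t => (∑' k, a k * t ^ k) / ∑' k, b k * t ^ k) (Ioi 0) := by
  have hB_pos {t : ℝ} (ht : 0 < t) : 0 < ∑' k, b k * t ^ k :=
    (hsb t ht).tsum_pos (fun k => mul_nonneg (hb k) (pow_nonneg ht.le k)) 0 (by simpa using hb₀)
  intro u hu v hv huv
  rw [div_lt_div_iff₀ (hB_pos hv) (hB_pos hu)]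
  exact tsum_mul_pow_mul_tsum_mul_pow_lt ha hb hab hab₀₁ (le_of_lt hu) huv
    (hsa u hu) (hsa v hv) (hsb u hu) (hsb v hv)

end PowerSeriesRatio

noncomputable def besselCoeff (ν : ℝ) (k : ℕ) : ℝ :=
  1 / ((k ! : ℝ) * Gamma (ν + k + 1))

noncomputable def besselSeries (ν t : ℝ) : ℝ :=
  ∑' k, besselCoeff ν k * t ^ k

section BesselSeries

variable {ν : ℝ}

lemma add_natCast_add_one_pos (hν : -1 < ν) (k : ℕ) : 0 < ν + k + 1 := by
  have := k.cast_nonneg (α := ℝ)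
  linarith

lemma besselCoeff_pos (hν : -1 < ν) (k : ℕ) : 0 < besselCoeff ν k :=
  one_div_pos.2 (mul_pos (by positivity) (Gamma_pos_of_pos (add_natCast_add_one_pos hν k)))

lemma besselCoeff_add_one (hν : -1 < ν) (k : ℕ) :
    besselCoeff (ν + 1) k = besselCoeff ν k / (ν + k + 1) := by
  have hpos := add_natCast_add_one_pos hν k
  have hΓ := (Gamma_pos_of_pos hpos).ne'
  rw [besselCoeff, besselCoeff, show ν + 1 + k + 1 = ν + k + 1 + 1 by ring,
    Gamma_add_one hpos.ne']
  field_simp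

lemma besselCoeff_succ (hν : -1 < ν) (k : ℕ) :
    besselCoeff ν (k + 1) = besselCoeff ν k / ((k + 1) * (ν + k + 1)) := by
  have hpos := add_natCast_add_one_pos hν k
  have hΓ := (Gamma_pos_of_pos hpos).ne'
  rw [besselCoeff, besselCoeff, Nat.cast_succ, show ν + (k + 1) + 1 = ν + k + 1 + 1 by ring,
    Gamma_add_one hpos.ne', Nat.factorial_succ]
  push_cast
  field_simp

lemma summable_besselCoeff_mul_pow (hν : -1 < ν) {t : ℝ} (ht : 0 < t) :
    Summable fun k => besselCoeff ν k * t ^ k := by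
  have hterm_pos (k : ℕ) : 0 < besselCoeff ν k * t ^ k :=
    mul_pos (besselCoeff_pos hν k) (pow_pos ht k)
  refine summable_of_ratio_test_tendsto_lt_one one_pos
    (Eventually.of_forall fun k => (hterm_pos k).ne') ?_
  have hratio (k : ℕ) : ‖besselCoeff ν (k + 1) * t ^ (k + 1)‖ / ‖besselCoeff ν k * t ^ k‖
      = t / ((k + 1) * (ν + k + 1)) := by
    have := (besselCoeff_pos hν k).ne'
    have := (add_natCast_add_one_pos hν k).ne'
    rw [norm_of_nonneg (hterm_pos _).le, norm_of_nonneg (hterm_pos _).le, besselCoeff_succ hν,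
      pow_succ]
    field_simp
  simp only [hratio]
  refine tendsto_const_nhds.div_atTop (Tendsto.atTop_mul_atTop₀ ?_ ?_)
  · exact tendsto_atTop_add_const_right _ 1 tendsto_natCast_atTop_atTop
  · exact tendsto_atTop_add_const_right _ 1
      (tendsto_atTop_add_const_left _ ν tendsto_natCast_atTop_atTop)

lemma strictAntiOn_besselSeries_add_one_div (hν : -1 < ν) :
    StrictAntiOn (fun t => besselSeries (ν + 1) t / besselSeries ν t) (Ioi 0) := by
  have hν₁ : -1 < ν + 1 := by linarith
  have hcross {j k : ℕ} (hjk : j ≤ k) :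
      besselCoeff ν k * besselCoeff ν j / (ν + k + 1)
        ≤ besselCoeff ν j * besselCoeff ν k / (ν + j + 1) := by
    rw [mul_comm]
    gcongr
    · exact (mul_pos (besselCoeff_pos hν j) (besselCoeff_pos hν k)).le
    exact add_natCast_add_one_pos hν j
  refine strictAntiOn_tsum_mul_pow_div_tsum_mul_pow (fun k => (besselCoeff_pos hν₁ k).le)
    (fun k => (besselCoeff_pos hν k).le) (besselCoeff_pos hν 0) (fun j k hjk => ?_) ?_
    (fun _ => summable_besselCoeff_mul_pow hν₁) (fun _ => summable_besselCoeff_mul_pow hν)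
  · simpa only [besselCoeff_add_one hν, div_mul_eq_mul_div] using hcross hjk
  · simp only [besselCoeff_add_one hν, div_mul_eq_mul_div, mul_comm (besselCoeff ν 1),
      Nat.cast_zero, Nat.cast_one]
    exact div_lt_div_of_pos_left (mul_pos (besselCoeff_pos hν 0) (besselCoeff_pos hν 1))
      (by linarith) (by linarith)

end BesselSeries

lemma besselI_eq_rpow_mul_besselSeries {ν m : ℝ} (hm : 0 < m) :
    besselI ν m = (m / 2) ^ ν * besselSeries ν (m ^ 2 / 4) := by
  rw [besselI, besselSeries, ← tsum_mul_left]
  refine tsum_congr fun k => ?_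
  rw [rpow_add (by positivity), mul_comm 2, rpow_mul (by positivity), rpow_natCast, rpow_two,
    ← pow_mul, pow_mul', besselCoeff, show (m / 2) ^ 2 = m ^ 2 / 4 by ring]
  ring

lemma besselI_add_one_div_mul_besselI {ν m : ℝ} (hm : 0 < m) :
    besselI (ν + 1) m / (m * besselI ν m)
      = besselSeries (ν + 1) (m ^ 2 / 4) / besselSeries ν (m ^ 2 / 4) / 2 := by
  have hpow : (m / 2) ^ ν ≠ 0 := (rpow_pos_of_pos (by positivity) ν).ne'
  rw [besselI_eq_rpow_mul_besselSeries hm, besselI_eq_rpow_mul_besselSeries hm,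
    rpow_add (by positivity), rpow_one]
  field_simp

theorem besselI_ratio_div_strictAnti (ν : ℝ) (hν : 0 < ν) :
    StrictAntiOn (fun m : ℝ => besselI (ν + 1) m / (m * besselI ν m)) (Set.Ioi 0) := by
  have hsq : StrictMonoOn (fun m : ℝ => m ^ 2 / 4) (Ioi 0) := fun x hx y _ hxy => by
    dsimp only
    gcongr
    exact le_of_lt hx
  have hsq_maps : MapsTo (fun m : ℝ => m ^ 2 / 4) (Ioi 0) (Ioi 0) := fun m hm =>
    mem_Ioi.2 (div_pos (pow_pos hm 2) four_pos)
  have hratio := (strictAntiOn_besselSeries_add_one_div (ν := ν) (by linarith)).comp_strictMonoOn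
    hsq hsq_maps
  intro x hx y hy hxy
  simp only [besselI_add_one_div_mul_besselI hx, besselI_add_one_div_mul_besselI hy]
  exact div_lt_div_of_pos_right (hratio hx hy hxy) two_pos
end

section
/- For every ν > 0 and every m > 0, the Turán-type inequality I_{ν+2}(m)·I_ν(m) < I_{ν+1}(m)² holds. -/
open Finset
open scoped Nat

theorem Real.Gamma_le_Gamma_add_nat_s2 {s : ℝ} (hs : 1 ≤ s) (k : ℕ) :
    Real.Gamma s ≤ Real.Gamma (s + k) := by
  induction k with
  | zero => simp
  | succ k ih =>
    have hsk : 1 ≤ s + k := by have : (0 : ℝ) ≤ k := k.cast_nonneg; linarith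
    rw [Nat.cast_succ, ← add_assoc, Real.Gamma_add_one (by linarith)]
    have := Real.Gamma_pos_of_pos (by linarith : 0 < s + k)
    nlinarith

theorem Finset.Nat.sum_antidiagonal_nonneg_of_add_swap_nonneg {f : ℕ × ℕ → ℝ}
    (hf : ∀ p, 0 ≤ f p + f p.swap) (n : ℕ) : 0 ≤ ∑ p ∈ antidiagonal n, f p := by
  have h := Finset.sum_nonneg fun p (_ : p ∈ antidiagonal n) => hf p
  rw [sum_add_distrib, Finset.Nat.sum_antidiagonal_swap (f := f)] at h
  linarith

theorem Finset.Nat.sum_antidiagonal_mul_pow_mul_mul_pow {R : Type*} [CommSemiring R]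
    (f g : ℕ → R) (q : R) (n : ℕ) :
    ∑ p ∈ antidiagonal n, f p.1 * q ^ p.1 * (g p.2 * q ^ p.2) =
      (∑ p ∈ antidiagonal n, f p.1 * g p.2) * q ^ n := by
  rw [sum_mul]
  refine sum_congr rfl fun p hp => ?_
  rw [← mem_antidiagonal.mp hp, pow_add]
  ring

noncomputable def besselICoeff (ν : ℝ) (k : ℕ) : ℝ :=
  1 / ((k ! : ℝ) * Real.Gamma (ν + k + 1))

noncomputable def besselISeries (ν q : ℝ) : ℝ :=
  ∑' k, besselICoeff ν k * q ^ k

theorem besselICoeff_pos {ν : ℝ} (hν : -1 < ν) (k : ℕ) : 0 < besselICoeff ν k := by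
  have hk : (0 : ℝ) ≤ k := k.cast_nonneg
  have := Real.Gamma_pos_of_pos (by linarith : 0 < ν + k + 1)
  unfold besselICoeff
  positivity

theorem besselICoeff_eq_mul_besselICoeff_add_one {ν : ℝ} {k : ℕ} (h : ν + k + 1 ≠ 0) :
    besselICoeff ν k = (ν + k + 1) * besselICoeff (ν + 1) k := by
  rw [besselICoeff, besselICoeff, add_right_comm ν 1, Real.Gamma_add_one h]
  field_simp

theorem besselICoeff_succ (ν : ℝ) (k : ℕ) :
    besselICoeff ν (k + 1) = besselICoeff (ν + 1) k / (k + 1) := by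
  rw [besselICoeff, besselICoeff, Nat.factorial_succ]
  push_cast
  rw [show ν + (k + 1 : ℝ) + 1 = ν + 1 + k + 1 by ring]
  field_simp

theorem besselICoeff_le {ν : ℝ} (hν : 0 ≤ ν) (k : ℕ) :
    besselICoeff ν k ≤ 1 / (k ! * Real.Gamma (ν + 1)) := by
  have hΓ := Real.Gamma_pos_of_pos (by linarith : 0 < ν + 1)
  have hle := Real.Gamma_le_Gamma_add_nat_s2 (by linarith : 1 ≤ ν + 1) k
  rw [add_right_comm] at hle
  unfold besselICoeff
  gcongr

theorem summable_norm_besselICoeff_mul_pow {ν : ℝ} (hν : 0 ≤ ν) (q : ℝ) :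
    Summable fun k => ‖besselICoeff ν k * q ^ k‖ := by
  refine ((Real.summable_pow_div_factorial |q|).mul_left (Real.Gamma (ν + 1))⁻¹).of_nonneg_of_le
    (fun k => norm_nonneg _) fun k => ?_
  have hc := besselICoeff_pos (by linarith) k
  calc ‖besselICoeff ν k * q ^ k‖ = besselICoeff ν k * |q| ^ k := by
        rw [norm_mul, norm_pow, Real.norm_eq_abs, Real.norm_eq_abs, abs_of_pos hc]
    _ ≤ 1 / (k ! * Real.Gamma (ν + 1)) * |q| ^ k := by gcongr; exact besselICoeff_le hν k
    _ = (Real.Gamma (ν + 1))⁻¹ * (|q| ^ k / k !) := by ring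

theorem hasSum_besselISeries_mul {μ ν : ℝ} (hμ : 0 ≤ μ) (hν : 0 ≤ ν) (q : ℝ) :
    HasSum (fun n => (∑ p ∈ antidiagonal n, besselICoeff μ p.1 * besselICoeff ν p.2) * q ^ n)
      (besselISeries μ q * besselISeries ν q) := by
  have hμ' := summable_norm_besselICoeff_mul_pow hμ q
  have hν' := summable_norm_besselICoeff_mul_pow hν q
  have h := (summable_norm_sum_mul_antidiagonal_of_summable_norm hμ' hν').of_norm.hasSum
  rw [besselISeries, besselISeries, tsum_mul_tsum_eq_tsum_sum_antidiagonal_of_summable_norm hμ' hν']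
  simpa only [Finset.Nat.sum_antidiagonal_mul_pow_mul_mul_pow] using h

theorem besselICoeff_mul_sub_mul {ν : ℝ} (hν : -1 < ν) (i j : ℕ) :
    besselICoeff (ν + 1) i * besselICoeff (ν + 1) j - besselICoeff (ν + 2) i * besselICoeff ν j =
      ((i : ℝ) - j + 1) * (besselICoeff (ν + 2) i * besselICoeff (ν + 1) j) := by
  have hi : (0 : ℝ) ≤ i := i.cast_nonneg
  have hj : (0 : ℝ) ≤ j := j.cast_nonneg
  rw [besselICoeff_eq_mul_besselICoeff_add_one (by linarith : ν + 1 + i + 1 ≠ 0),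
    besselICoeff_eq_mul_besselICoeff_add_one (by linarith : ν + j + 1 ≠ 0),
    show ν + 1 + 1 = ν + 2 by ring]
  ring

theorem sub_mul_div_succ_add_swap_nonneg {x y : ℝ} (hx : 0 ≤ x) (hy : 0 ≤ y) (i j : ℕ) :
    0 ≤ ((i : ℝ) - j) * (x * y / (j + 1)) + ((j : ℝ) - i) * (y * x / (i + 1)) := by
  have h : ((i : ℝ) - j) * (x * y / (j + 1)) + ((j : ℝ) - i) * (y * x / (i + 1)) =
      x * y * (((i : ℝ) - j) ^ 2 / ((i + 1) * (j + 1))) := by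
    field_simp
    ring
  rw [h]
  positivity

theorem sum_antidiagonal_besselICoeff_pos {ν : ℝ} (hν : -1 < ν) (n : ℕ) :
    0 < ∑ p ∈ antidiagonal n,
      ((p.1 : ℝ) - p.2 + 1) * (besselICoeff (ν + 2) p.1 * besselICoeff (ν + 1) p.2) := by
  have hc₂ := besselICoeff_pos (by linarith : -1 < ν + 2)
  have hc₁ := besselICoeff_pos (by linarith : -1 < ν + 1)
  cases n with
  | zero => simpa using mul_pos (hc₂ 0) (hc₁ 0)
  | succ n =>
    rw [Finset.Nat.sum_antidiagonal_succ']
    refine add_pos_of_pos_of_nonneg ?_ ?_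
    · have : (0 : ℝ) < (n + 1 : ℕ) - (0 : ℕ) + 1 := by push_cast; linarith [n.cast_nonneg (α := ℝ)]
      exact mul_pos this (mul_pos (hc₂ _) (hc₁ _))
    · have hshift : ∀ p ∈ antidiagonal n,
          ((p.1 : ℝ) - (p.2 + 1 : ℕ) + 1) *
              (besselICoeff (ν + 2) p.1 * besselICoeff (ν + 1) (p.2 + 1)) =
            ((p.1 : ℝ) - p.2) *
              (besselICoeff (ν + 2) p.1 * besselICoeff (ν + 2) p.2 / (p.2 + 1)) := by
        intro p _
        rw [besselICoeff_succ, show ν + 1 + 1 = ν + 2 by ring]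
        push_cast
        ring
      rw [sum_congr rfl hshift]
      exact Finset.Nat.sum_antidiagonal_nonneg_of_add_swap_nonneg (fun ⟨i, j⟩ =>
        sub_mul_div_succ_add_swap_nonneg (hc₂ i).le (hc₂ j).le i j) n

theorem sum_antidiagonal_besselICoeff_lt {ν : ℝ} (hν : -1 < ν) (n : ℕ) :
    ∑ p ∈ antidiagonal n, besselICoeff (ν + 2) p.1 * besselICoeff ν p.2 <
      ∑ p ∈ antidiagonal n, besselICoeff (ν + 1) p.1 * besselICoeff (ν + 1) p.2 := by
  rw [← sub_pos, ← sum_sub_distrib]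
  simpa only [besselICoeff_mul_sub_mul hν] using sum_antidiagonal_besselICoeff_pos hν n

theorem besselISeries_turan {ν q : ℝ} (hν : 0 ≤ ν) (hq : 0 ≤ q) :
    besselISeries (ν + 2) q * besselISeries ν q < besselISeries (ν + 1) q ^ 2 := by
  have hlt := sum_antidiagonal_besselICoeff_lt (by linarith : -1 < ν)
  rw [sq]
  refine hasSum_lt (fun n => ?_) (i := 0) ?_ (hasSum_besselISeries_mul (by linarith) hν q)
    (hasSum_besselISeries_mul (by linarith) (by linarith) q)
  · exact mul_le_mul_of_nonneg_right (hlt n).le (pow_nonneg hq n)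
  · simpa only [pow_zero, mul_one] using hlt 0

theorem besselI_eq_rpow_mul_besselISeries (ν : ℝ) {m : ℝ} (hm : 0 < m) :
    besselI ν m = (m / 2) ^ ν * besselISeries ν ((m / 2) ^ 2) := by
  rw [besselI, besselISeries, ← tsum_mul_left]
  congr 1 with k
  rw [show 2 * (k : ℝ) + ν = (2 * k : ℕ) + ν by push_cast; ring,
    Real.rpow_add (by linarith), Real.rpow_natCast, pow_mul, besselICoeff]
  ring

theorem besselI_turan (ν : ℝ) (hν : 0 < ν) (m : ℝ) (hm : 0 < m) :
    besselI (ν + 2) m * besselI ν m < (besselI (ν + 1) m) ^ 2 := by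
  have hx : 0 < m / 2 := by linarith
  have hpow : ((m / 2) ^ (ν + 1)) ^ 2 = (m / 2) ^ (ν + 2) * (m / 2) ^ ν := by
    rw [sq, ← Real.rpow_add hx, ← Real.rpow_add hx]
    ring_nf
  simp only [besselI_eq_rpow_mul_besselISeries _ hm]
  calc (m / 2) ^ (ν + 2) * besselISeries (ν + 2) ((m / 2) ^ 2) *
        ((m / 2) ^ ν * besselISeries ν ((m / 2) ^ 2))
      = (m / 2) ^ (ν + 2) * (m / 2) ^ ν *
          (besselISeries (ν + 2) ((m / 2) ^ 2) * besselISeries ν ((m / 2) ^ 2)) := by ring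
    _ < (m / 2) ^ (ν + 2) * (m / 2) ^ ν * besselISeries (ν + 1) ((m / 2) ^ 2) ^ 2 := by
      gcongr
      exact besselISeries_turan hν.le (sq_nonneg _)
    _ = ((m / 2) ^ (ν + 1) * besselISeries (ν + 1) ((m / 2) ^ 2)) ^ 2 := by
      rw [mul_pow, hpow]
end

section
/- Let κ, ν, τ > 0. Define, for w ∈ [0, 1], M(w) = κ + w/τ and Ĵ(w) = −w/τ + log(I_ν(M(w))/M(w)^ν) − log(I_ν(κ)/κ^ν). Then Ĵ is strictly decreasing on [0, 1]. -/
/-- `Ĵ(w) = −w/τ + log(I_ν(κ + w/τ)/(κ + w/τ)^ν) − log(I_ν(κ)/κ^ν)`. -/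
noncomputable def JhatW (κ ν τ w : ℝ) : ℝ :=
  -w / τ + Real.log (besselI ν (κ + w / τ) / (κ + w / τ) ^ ν) -
    Real.log (besselI ν κ / κ ^ ν)

open Real

namespace besselI

noncomputable def coeff (ν : ℝ) (k : ℕ) : ℝ :=
  1 / ((Nat.factorial k : ℝ) * Gamma (ν + k + 1))

noncomputable def reduced (ν m : ℝ) : ℝ :=
  ∑' k : ℕ, coeff ν k * (m / 2) ^ (2 * k)

/-- At `k = 0` the factor `k` makes the truncated exponent `2 * 0 - 1 = 0` harmless. -/
noncomputable def reducedDeriv (ν m : ℝ) : ℝ :=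
  ∑' k : ℕ, k * coeff ν k * (m / 2) ^ (2 * k - 1)

variable {ν : ℝ}

lemma coeff_pos (hν : 0 ≤ ν) (k : ℕ) : 0 < coeff ν k := by
  have := Gamma_pos_of_pos (by positivity : 0 < ν + k + 1)
  unfold coeff
  positivity

lemma coeff_eq_mul_coeff_succ (hν : 0 ≤ ν) (k : ℕ) :
    coeff ν k = (k + 1) * (ν + k + 1) * coeff ν (k + 1) := by
  have h : 0 < ν + k + 1 := by positivity
  have hΓ : Gamma (ν + (k + 1 : ℕ) + 1) = (ν + k + 1) * Gamma (ν + k + 1) := by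
    rw [show ν + ((k + 1 : ℕ) : ℝ) + 1 = (ν + k + 1) + 1 by push_cast; ring, Gamma_add_one h.ne']
  unfold coeff
  rw [hΓ, Nat.factorial_succ]
  push_cast
  field_simp [(Gamma_pos_of_pos h).ne']

lemma coeff_mul_factorial_le (hν : 0 ≤ ν) (k : ℕ) :
    coeff ν k * k.factorial ≤ coeff ν 0 := by
  induction k with
  | zero => simp
  | succ k ih =>
    have hc := coeff_pos hν (k + 1)
    calc coeff ν (k + 1) * (k + 1).factorial
        = coeff ν (k + 1) * (k + 1) * k.factorial * 1 := by
          rw [Nat.factorial_succ]; push_cast; ring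
      _ ≤ coeff ν (k + 1) * (k + 1) * k.factorial * (ν + k + 1) := by
          gcongr; linarith
      _ = coeff ν k * k.factorial := by rw [coeff_eq_mul_coeff_succ hν k]; ring
      _ ≤ coeff ν 0 := ih

lemma coeff_mul_pow_le (hν : 0 ≤ ν) (k : ℕ) {a : ℝ} (ha : 0 ≤ a) :
    coeff ν k * a ^ k ≤ coeff ν 0 * (a ^ k / k.factorial) := by
  have hk : (k.factorial : ℝ) ≠ 0 := by positivity
  calc coeff ν k * a ^ k = coeff ν k * k.factorial * (a ^ k / k.factorial) := by field_simp
    _ ≤ coeff ν 0 * (a ^ k / k.factorial) := by gcongr; exact coeff_mul_factorial_le hν k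

lemma summable_reduced (hν : 0 ≤ ν) (m : ℝ) :
    Summable fun k : ℕ => coeff ν k * (m / 2) ^ (2 * k) := by
  refine .of_nonneg_of_le (fun k => ?_) (fun k => ?_)
    ((summable_pow_div_factorial ((m / 2) ^ 2)).mul_left (coeff ν 0))
  · exact mul_nonneg (coeff_pos hν k).le (Even.pow_nonneg ⟨k, two_mul k⟩ _)
  · rw [pow_mul]
    exact coeff_mul_pow_le hν k (sq_nonneg _)

lemma norm_reducedDeriv_term_le (hν : 0 ≤ ν) {R y : ℝ} (hR : 1 ≤ R) (hy : |y| ≤ R) (k : ℕ) :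
    ‖k * coeff ν k * (y / 2) ^ (2 * k - 1)‖ ≤ coeff ν 0 * ((2 * R ^ 2) ^ k / k.factorial) := by
  have hc := coeff_pos hν k
  have hy2 : |y / 2| ≤ R := by rw [abs_div, abs_two]; linarith [abs_nonneg y]
  calc ‖k * coeff ν k * (y / 2) ^ (2 * k - 1)‖ = k * coeff ν k * |y / 2| ^ (2 * k - 1) := by
        rw [norm_mul, norm_pow, Real.norm_eq_abs, Real.norm_eq_abs,
          abs_of_nonneg (by positivity)]
    _ ≤ 2 ^ k * coeff ν k * R ^ (2 * k) := by
        gcongr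
        · exact_mod_cast Nat.lt_two_pow_self.le
        · exact (pow_le_pow_left₀ (abs_nonneg _) hy2 _).trans (pow_le_pow_right₀ hR (Nat.sub_le _ _))
    _ = coeff ν k * (2 * R ^ 2) ^ k := by rw [mul_pow, pow_mul]; ring
    _ ≤ coeff ν 0 * ((2 * R ^ 2) ^ k / k.factorial) := coeff_mul_pow_le hν k (by positivity)

lemma summable_reducedDeriv (hν : 0 ≤ ν) (m : ℝ) :
    Summable fun k : ℕ => k * coeff ν k * (m / 2) ^ (2 * k - 1) := by
  have hR : 1 ≤ |m| + 1 := le_add_of_nonneg_left (abs_nonneg m)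
  refine .of_norm (.of_nonneg_of_le (fun _ => norm_nonneg _)
    (norm_reducedDeriv_term_le hν hR (by linarith) ·)
    ((summable_pow_div_factorial (2 * (|m| + 1) ^ 2)).mul_left (coeff ν 0)))

lemma hasDerivAt_reduced (hν : 0 ≤ ν) (m : ℝ) :
    HasDerivAt (reduced ν) (reducedDeriv ν m) m := by
  have hm : m ∈ Set.Ioo (-(|m| + 1)) (|m| + 1) :=
    ⟨by linarith [neg_abs_le m], by linarith [le_abs_self m]⟩
  refine hasDerivAt_tsum_of_isPreconnected (g := fun k z => coeff ν k * (z / 2) ^ (2 * k))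
    (g' := fun k y => k * coeff ν k * (y / 2) ^ (2 * k - 1))
    ((summable_pow_div_factorial (2 * (|m| + 1) ^ 2)).mul_left (coeff ν 0))
    isOpen_Ioo isPreconnected_Ioo (fun k y _ => ?_) (fun k y hy => ?_) hm (summable_reduced hν m) hm
  · exact ((((hasDerivAt_id' y).div_const 2).fun_pow (2 * k)).const_mul (coeff ν k)).congr_deriv
      (by push_cast; ring)
  · exact norm_reducedDeriv_term_le hν (le_add_of_nonneg_left (abs_nonneg m))
      (abs_le.2 ⟨hy.1.le, hy.2.le⟩) k

lemma reducedDeriv_term_succ_le (hν : 0 ≤ ν) (k : ℕ) (x : ℝ) :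
    (k + 1) * coeff ν (k + 1) * x ^ (2 * k + 1) ≤
      (coeff ν k * x ^ (2 * k) + coeff ν (k + 1) * x ^ (2 * k + 2)) / 2 := by
  have hcX : 0 ≤ coeff ν (k + 1) * x ^ (2 * k) :=
    mul_nonneg (coeff_pos hν _).le (Even.pow_nonneg ⟨k, two_mul k⟩ x)
  have amgm : 2 * (k + 1) * x ≤ (k + 1) * (ν + k + 1) + x ^ 2 := by
    nlinarith [sq_nonneg ((k : ℝ) + 1 - x)]
  have := mul_le_mul_of_nonneg_left amgm hcX
  rw [coeff_eq_mul_coeff_succ hν k, pow_succ, pow_add]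
  linarith

lemma reducedDeriv_lt (hν : 0 ≤ ν) (m : ℝ) : reducedDeriv ν m < reduced ν m := by
  have hg := summable_reduced hν m
  have hg' := summable_reducedDeriv hν m
  set x := m / 2
  have hshift : reducedDeriv ν m = ∑' k : ℕ, (k + 1) * coeff ν (k + 1) * x ^ (2 * k + 1) := by
    rw [reducedDeriv, hg'.tsum_eq_zero_add]
    simp [mul_add]
  have htail : ∑' k : ℕ, coeff ν (k + 1) * x ^ (2 * k + 2) = reduced ν m - coeff ν 0 := by
    rw [reduced, hg.tsum_eq_zero_add]
    simp [mul_add]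
  have hg_succ : Summable fun k : ℕ => coeff ν (k + 1) * x ^ (2 * k + 2) := by
    simpa [mul_add] using (summable_nat_add_iff 1).2 hg
  have hg'_succ : Summable fun k : ℕ => (k + 1) * coeff ν (k + 1) * x ^ (2 * k + 1) := by
    simpa [mul_add] using (summable_nat_add_iff 1).2 hg'
  have hle : reducedDeriv ν m ≤ (reduced ν m + (reduced ν m - coeff ν 0)) / 2 := by
    rw [hshift, ← htail, reduced, ← hg.tsum_add hg_succ, ← tsum_div_const]
    exact Summable.tsum_le_tsum (reducedDeriv_term_succ_le hν · x) hg'_succ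
      ((hg.add hg_succ).div_const 2)
  linarith [coeff_pos hν 0]

lemma reduced_pos (hν : 0 ≤ ν) (m : ℝ) : 0 < reduced ν m :=
  (summable_reduced hν m).tsum_pos
    (fun k => mul_nonneg (coeff_pos hν k).le (Even.pow_nonneg ⟨k, two_mul k⟩ _)) 0
    (by simpa using coeff_pos hν 0)

lemma strictAnti_exp_neg_mul_reduced (hν : 0 ≤ ν) :
    StrictAnti fun m => exp (-m) * reduced ν m := by
  refine strictAnti_of_hasDerivAt_neg (f' := fun m => exp (-m) * (reducedDeriv ν m - reduced ν m))
    (fun m => ?_) (fun m => mul_neg_of_pos_of_neg (exp_pos _) (sub_neg.2 (reducedDeriv_lt hν m)))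
  exact (((hasDerivAt_neg m).exp).mul (hasDerivAt_reduced hν m)).congr_deriv (by ring)

lemma eq_half_rpow_mul_reduced {m : ℝ} (hm : 0 < m) : besselI ν m = (m / 2) ^ ν * reduced ν m := by
  rw [besselI, reduced, ← tsum_mul_left]
  refine tsum_congr fun k => ?_
  rw [show 2 * (k : ℝ) + ν = ν + ((2 * k : ℕ) : ℝ) by push_cast; ring,
    rpow_add (by positivity), rpow_natCast, coeff]
  ring

lemma log_div_rpow (hν : 0 ≤ ν) {m : ℝ} (hm : 0 < m) :
    log (besselI ν m / m ^ ν) = m + log (exp (-m) * reduced ν m) - ν * log 2 := by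
  have hg := reduced_pos hν m
  have h : besselI ν m / m ^ ν = exp m * (exp (-m) * reduced ν m) / 2 ^ ν := by
    rw [eq_half_rpow_mul_reduced hm, div_rpow hm.le zero_le_two, ← mul_assoc, ← exp_add]
    field_simp
    simp
  rw [h, log_div (by positivity) (by positivity), log_mul (by positivity) (by positivity), log_exp,
    log_rpow two_pos]

end besselI

theorem JhatW_strictAnti (κ ν τ : ℝ) (hκ : 0 < κ) (hν : 0 < ν) (hτ : 0 < τ) :
    StrictAntiOn (JhatW κ ν τ) (Set.Icc (0:ℝ) 1) := by
  intro w₁ hw₁ w₂ hw₂ hlt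
  have hM₁ : 0 < κ + w₁ / τ := by have := div_nonneg hw₁.1 hτ.le; linarith
  have hM₂ : 0 < κ + w₂ / τ := by have := div_nonneg hw₂.1 hτ.le; linarith
  have hF : exp (-(κ + w₂ / τ)) * besselI.reduced ν (κ + w₂ / τ) <
      exp (-(κ + w₁ / τ)) * besselI.reduced ν (κ + w₁ / τ) :=
    besselI.strictAnti_exp_neg_mul_reduced hν.le (by gcongr)
  have hlog := log_lt_log (mul_pos (exp_pos _) (besselI.reduced_pos hν.le _)) hF
  simp only [JhatW, neg_div, besselI.log_div_rpow hν.le hM₁, besselI.log_div_rpow hν.le hM₂]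
  linarith
end
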